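/- arXiv:2006.00945 — 3 statements merged into one kernel-verified Lean document; each statement's English description precedes it below -/
import Mathlib

section
/- Suppose the robust Bellman operator H is well defined on 𝕌, Assumption 1 holds (for every u ∈ 𝕌 the map (x,a) ↦ (H^a u)(x) is Borel measurable on X × A and, for each fixed x ∈ X, lower semicontinuous in a ∈ A), and let u* ∈ 𝕌 be the unique fixed point of H. Then there exists a Borel measurable map f : X → A (a deterministic Markov stationary policy) such that (H^{f(x)} u*)(x) = (H u*)(x) = u*(x) for every x ∈ X. -/
open MeasureTheory ProbabilityTheory

open Set Function PolishSpace PiNat TopologicalSpace Metric Filter Topology MeasureTheory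

section NovikovSep

variable {α : Type*} [TopologicalSpace α] [T2Space α] [MeasurableSpace α] [OpensMeasurableSpace α]

/-- A countable family of sets is (countably) measurably separated if there are measurable
supersets with empty intersection. -/
def SepFam {α : Type*} [MeasurableSpace α] (s : ℕ → Set α) : Prop :=
  ∃ B : ℕ → Set α, (∀ n, s n ⊆ B n) ∧ (∀ n, MeasurableSet (B n)) ∧ (⋂ n, B n) = ∅

theorem SepFam.mono {α : Type*} [MeasurableSpace α] {s t : ℕ → Set α} (h : SepFam t)
    (hst : ∀ n, s n ⊆ t n) : SepFam s := by
  obtain ⟨B, h1, h2, h3⟩ := h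
  exact ⟨B, fun n => (hst n).trans (h1 n), h2, h3⟩

/-- If the `j`-th set of a family is covered by countably many pieces, and each family obtained
by replacing the `j`-th set with a piece is separated, then the family is separated. -/
theorem sepFam_of_pieces {α : Type*} [MeasurableSpace α] {s : ℕ → Set α} {j : ℕ} {t : ℕ → Set α}
    (hcov : s j ⊆ ⋃ i, t i) (h : ∀ i, SepFam (Function.update s j (t i))) : SepFam s := by
  choose B hB1 hB2 hB3 using h
  classical
  refine ⟨fun n => if n = j then ⋃ i, B i j else ⋂ i, B i n, fun n => ?_, fun n => ?_, ?_⟩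
  · by_cases hn : n = j
    · simp only [if_pos hn]
      rw [hn]
      refine hcov.trans (iUnion_subset fun i => subset_iUnion_of_subset i ?_)
      have := hB1 i j
      simpa [Function.update_self] using this
    · simp only [if_neg hn]
      refine subset_iInter fun i => ?_
      have := hB1 i n
      simpa [Function.update_of_ne hn] using this
  · by_cases hn : n = j
    · simp only [hn, if_pos rfl]; exact MeasurableSet.iUnion fun i => hB2 i j
    · simp only [if_neg hn]; exact MeasurableSet.iInter fun i => hB2 i n
  · ext x
    simp only [mem_iInter, mem_empty_iff_false, iff_false]
    intro hx
    have hxj := hx j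
    simp only [eq_self_iff_true, if_true] at hxj
    obtain ⟨i, hi⟩ := mem_iUnion.1 hxj
    have : x ∈ ⋂ n, B i n := by
      refine mem_iInter.2 fun n => ?_
      by_cases hn : n = j
      · subst hn; exact hi
      · have := hx n
        simp only [if_neg hn] at this
        exact mem_iInter.1 this i
    rw [hB3 i] at this
    exact this

end NovikovSep

section Ranges

variable {α : Type*} [TopologicalSpace α] [T2Space α] [MeasurableSpace α] [OpensMeasurableSpace α]

/-- Novikov's countable separation theorem for ranges of continuous functions on Baire space. -/
theorem sepFam_range_of_iInter_empty {f : ℕ → (ℕ → ℕ) → α} (hf : ∀ n, Continuous (f n))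
    (hdisj : (⋂ n, Set.range (f n)) = ∅) : SepFam (fun n => Set.range (f n)) := by
  classical
  by_contra hsep
  -- refinement step: one can extend the cylinder in any given slot keeping non-separation
  have I : ∀ (j : ℕ) (m : ℕ → ℕ) (x : ℕ → ℕ → ℕ),
      ¬ SepFam (fun n => f n '' cylinder (x n) (m n)) →
      ∃ x' : ℕ → ℕ, x' ∈ cylinder (x j) (m j) ∧
        ¬ SepFam (fun n => f n '' cylinder (Function.update x j x' n)
            (Function.update m j (m j + 1) n)) := by
    intro j m x
    contrapose!
    intro H
    apply sepFam_of_pieces (j := j)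
      (t := fun i => f j '' cylinder (Function.update (x j) (m j) i) (m j + 1))
    · rw [← iUnion_cylinder_update (x j) (m j), image_iUnion]
    · intro i
      have h1 := H (Function.update (x j) (m j) i) (update_mem_cylinder _ _ _)
      convert h1 using 2 with n
      by_cases hn : n = j
      · subst hn
        simp [Function.update_self]
      · simp [Function.update_of_ne hn]
  -- the states of the construction
  let A := { q : ℕ × (ℕ → ℕ) × (ℕ → ℕ → ℕ) //
      ¬ SepFam (fun n => f n '' cylinder (q.2.2 n) (q.2.1 n)) }
  have step : ∀ q : A, ∃ x' : ℕ → ℕ,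
      x' ∈ cylinder (q.1.2.2 (Nat.unpair q.1.1).1) (q.1.2.1 (Nat.unpair q.1.1).1) ∧
      ¬ SepFam (fun n => f n '' cylinder
          (Function.update q.1.2.2 (Nat.unpair q.1.1).1 x' n)
          (Function.update q.1.2.1 (Nat.unpair q.1.1).1
            (q.1.2.1 (Nat.unpair q.1.1).1 + 1) n)) := by
    rintro ⟨⟨k, m, x⟩, hq⟩
    exact I (Nat.unpair k).1 m x hq
  choose G hG1 hG2 using step
  let F : A → A := fun q =>
    ⟨⟨q.1.1 + 1, Function.update q.1.2.1 (Nat.unpair q.1.1).1 (q.1.2.1 (Nat.unpair q.1.1).1 + 1),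
      Function.update q.1.2.2 (Nat.unpair q.1.1).1 (G q)⟩, hG2 q⟩
  have hp0 : ¬ SepFam (fun n => f n '' cylinder ((fun _ _ => 0) n) ((fun _ => 0) n)) := by
    simpa [cylinder_zero, image_univ] using hsep
  let p : ℕ → A := fun k => F^[k] ⟨⟨0, fun _ => 0, fun _ _ => 0⟩, hp0⟩
  have prec : ∀ k, p (k + 1) = F (p k) := fun k => by
    simp only [p, Function.iterate_succ', Function.comp]
  have pk : ∀ k, (p k).1.1 = k := by
    intro k
    induction' k with k IH
    · rfl
    · rw [prec]; simp only [F]; rw [IH]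
  set m : ℕ → ℕ → ℕ := fun k => (p k).1.2.1 with hm
  set xs : ℕ → ℕ → ℕ → ℕ := fun k => (p k).1.2.2 with hxs
  have hmrec : ∀ k, m (k + 1) = Function.update (m k) (Nat.unpair k).1 (m k (Nat.unpair k).1 + 1) := by
    intro k
    simp only [hm, prec k, F]
    rw [pk k]
  have hxrec : ∀ k, xs (k + 1) = Function.update (xs k) (Nat.unpair k).1 (G (p k)) := by
    intro k
    simp only [hxs, prec k, F]
    rw [pk k]
  -- monotonicity of lengths
  have hmono : ∀ n k, m k n ≤ m (k + 1) n := by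
    intro n k
    rw [hmrec k]
    by_cases hn : n = (Nat.unpair k).1
    · subst hn; simp
    · rw [Function.update_of_ne hn]
  have hmono' : ∀ n, Monotone fun k => m k n := fun n =>
    monotone_nat_of_le_succ fun k => hmono n k
  -- lengths are unbounded
  have hbump : ∀ n t, m (Nat.pair n t + 1) n = m (Nat.pair n t) n + 1 := by
    intro n t
    rw [hmrec (Nat.pair n t), Nat.unpair_pair, Function.update_self]
  have hunb : ∀ n N, ∃ k, N ≤ m k n := by
    intro n N
    refine ⟨Nat.pair n N + 1, ?_⟩
    induction' N with N IH
    · exact Nat.zero_le _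
    · have h1 : m (Nat.pair n N + 1) n ≤ m (Nat.pair n (N + 1)) n :=
        hmono' n (Nat.pair_lt_pair_right n (Nat.lt_succ_self N))
      have h2 := hbump n (N + 1)
      omega
  have hNle : ∀ n N, N ≤ m (Nat.pair n N + 1) n := by
    intro n N
    induction' N with N IH
    · exact Nat.zero_le _
    · have h1 : m (Nat.pair n N + 1) n ≤ m (Nat.pair n (N + 1)) n :=
        hmono' n (Nat.pair_lt_pair_right n (Nat.lt_succ_self N))
      have h2 := hbump n (N + 1)
      omega
  -- coordinates stabilize
  have hstab : ∀ n q k, q < m k n → ∀ k', k ≤ k' → xs k' n q = xs k n q := by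
    intro n q k hq k' hk
    induction k', hk using Nat.le_induction with
    | base => rfl
    | succ k' hkk' IH =>
      rw [hxrec k']
      rcases eq_or_ne n (Nat.unpair k').1 with hn | hn
      · have e : (Function.update (xs k') (Nat.unpair k').1 (G (p k'))) n = G (p k') := by
          rw [hn]; exact Function.update_self _ _ _
        rw [e]
        have hcylG := hG1 (p k')
        have mdef : (p k').1.2.1 = m k' := rfl
        have xdef : (p k').1.2.2 = xs k' := rfl
        rw [pk k', mdef, xdef, ← hn] at hcylG
        have hGq := mem_cylinder_iff.1 hcylG q (lt_of_lt_of_le hq (hmono' n hkk'))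
        rw [hGq]
        exact IH
      · rw [Function.update_of_ne hn]
        exact IH
  -- the limit sequences
  set y : ℕ → ℕ → ℕ := fun n q => xs (Nat.pair n (q + 1) + 1) n q with hy
  have hyx : ∀ n k q, q < m k n → y n q = xs k n q := by
    intro n k q hq
    have h1 : q < m (Nat.pair n (q + 1) + 1) n :=
      lt_of_lt_of_le (Nat.lt_succ_self q) (hNle n (q + 1))
    have e1 := hstab n q k hq (max k (Nat.pair n (q + 1) + 1)) (le_max_left _ _)
    have e2 := hstab n q (Nat.pair n (q + 1) + 1) h1 (max k (Nat.pair n (q + 1) + 1))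
      (le_max_right _ _)
    simp only [hy]
    rw [← e2, e1]
  have hcyl : ∀ n k, cylinder (xs k n) (m k n) = cylinder (y n) (m k n) := by
    intro n k
    ext z
    simp only [mem_cylinder_iff]
    constructor
    · intro h i hi
      rw [hyx n k i hi]
      exact h i hi
    · intro h i hi
      rw [← hyx n k i hi]
      exact h i hi
  -- long cylinders around the limit points are still non-separated
  have M : ∀ (N n1 n2 : ℕ), n1 ≠ n2 → ¬ SepFam (fun n =>
      if n = n1 then f n1 '' cylinder (y n1) N
      else if n = n2 then f n2 '' cylinder (y n2) N else Set.range (f n)) := by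
    intro N n1 n2 _hne
    obtain ⟨k1, hk1⟩ := hunb n1 N
    obtain ⟨k2, hk2⟩ := hunb n2 N
    set k := max k1 k2 with hk
    have hb1 : N ≤ m k n1 := hk1.trans (hmono' n1 (le_max_left _ _))
    have hb2 : N ≤ m k n2 := hk2.trans (hmono' n2 (le_max_right _ _))
    intro hS
    have hpk2 : ¬ SepFam (fun n => f n '' cylinder (xs k n) (m k n)) := (p k).2
    apply hpk2
    apply hS.mono
    intro n
    by_cases h1 : n = n1
    · subst h1
      simp only [eq_self_iff_true, if_true]
      refine image_mono ?_
      rw [hcyl n k]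
      exact cylinder_anti _ hb1
    · by_cases h2 : n = n2
      · subst h2
        simp only [if_neg h1, eq_self_iff_true, if_true]
        refine image_mono ?_
        rw [hcyl n k]
        exact cylinder_anti _ hb2
      · simp only [if_neg h1, if_neg h2]
        exact (image_subset_range _ _)
  -- now derive a contradiction
  by_cases hall : ∀ n, f n (y n) = f 0 (y 0)
  · have hmem : f 0 (y 0) ∈ ⋂ n, Set.range (f n) :=
      mem_iInter.2 fun n => (hall n) ▸ mem_range_self (y n)
    rw [hdisj] at hmem
    exact hmem
  · push_neg at hall
    obtain ⟨n1, hn1⟩ := hall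
    have hne : n1 ≠ 0 := by rintro rfl; exact hn1 rfl
    obtain ⟨u, v, u_open, v_open, xu, yv, huv⟩ :
        ∃ u v : Set α, IsOpen u ∧ IsOpen v ∧ f n1 (y n1) ∈ u ∧ f 0 (y 0) ∈ v ∧ Disjoint u v :=
      t2_separation hn1
    letI : MetricSpace (ℕ → ℕ) := metricSpaceNatNat
    obtain ⟨ε1, ε1pos, hε1⟩ : ∃ ε1 : ℝ, ε1 > 0 ∧ Metric.ball (y n1) ε1 ⊆ f n1 ⁻¹' u := by
      apply Metric.mem_nhds_iff.1
      exact (hf n1).continuousAt.preimage_mem_nhds (u_open.mem_nhds xu)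
    obtain ⟨ε2, ε2pos, hε2⟩ : ∃ ε2 : ℝ, ε2 > 0 ∧ Metric.ball (y 0) ε2 ⊆ f 0 ⁻¹' v := by
      apply Metric.mem_nhds_iff.1
      exact (hf 0).continuousAt.preimage_mem_nhds (v_open.mem_nhds yv)
    obtain ⟨N, hN⟩ : ∃ N : ℕ, (1 / 2 : ℝ) ^ N < min ε1 ε2 :=
      exists_pow_lt_of_lt_one (lt_min ε1pos ε2pos) (by norm_num)
    apply M N n1 0 hne
    classical
    refine ⟨fun n => if n = n1 then u else if n = 0 then v else univ, fun n => ?_, fun n => ?_, ?_⟩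
    · by_cases h1 : n = n1
      · subst h1
        simp only [eq_self_iff_true, if_true]
        rw [image_subset_iff]
        refine Subset.trans ?_ hε1
        intro z hz
        rw [mem_cylinder_iff_dist_le] at hz
        exact lt_of_le_of_lt hz (hN.trans_le (min_le_left _ _))
      · by_cases h2 : n = 0
        · subst h2
          simp only [if_neg h1, eq_self_iff_true, if_true]
          rw [image_subset_iff]
          refine Subset.trans ?_ hε2
          intro z hz
          rw [mem_cylinder_iff_dist_le] at hz
          exact lt_of_le_of_lt hz (hN.trans_le (min_le_right _ _))
        · simp only [if_neg h1, if_neg h2]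
          exact subset_univ _
    · by_cases h1 : n = n1
      · simp only [if_pos h1]; exact u_open.measurableSet
      · by_cases h2 : n = 0
        · simp only [if_neg h1, if_pos h2]; exact v_open.measurableSet
        · simp only [if_neg h1, if_neg h2]; exact MeasurableSet.univ
    · ext z
      simp only [mem_iInter, mem_empty_iff_false, iff_false]
      intro hz
      have hz1 := hz n1
      have hz0 := hz 0
      simp only [eq_self_iff_true, if_true] at hz1
      rw [if_neg (Ne.symm hne), if_pos rfl] at hz0
      exact absurd hz0 (disjoint_left.1 huv hz1)

/-- **Novikov's countable separation theorem**: countably many analytic sets with empty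
intersection can be enlarged to Borel sets with empty intersection. -/
theorem sepFam_of_analytic {s : ℕ → Set α} (hs : ∀ n, AnalyticSet (s n))
    (h : (⋂ n, s n) = ∅) : SepFam s := by
  classical
  by_cases he : ∃ n, s n = ∅
  · obtain ⟨n0, hn0⟩ := he
    refine ⟨fun n => if n = n0 then ∅ else univ, fun n => ?_, fun n => ?_, ?_⟩
    · by_cases hn : n = n0
      · subst hn; rw [hn0]; simp
      · simp [if_neg hn]
    · by_cases hn : n = n0 <;> simp [hn]
    · ext z
      simp only [mem_iInter, mem_empty_iff_false, iff_false]
      intro hz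
      have := hz n0
      simp at this
  · push_neg at he
    have hex : ∀ n, ∃ g : (ℕ → ℕ) → α, Continuous g ∧ Set.range g = s n := by
      intro n
      have hn := hs n
      rw [AnalyticSet] at hn
      rcases hn with h0 | ⟨g, hg, hr⟩
      · exact absurd h0 (he n).ne_empty
      · exact ⟨g, hg, hr⟩
    choose g hgc hgr using hex
    have hge : (fun n => Set.range (g n)) = s := funext hgr
    have := sepFam_range_of_iInter_empty hgc (by rw [hge]; exact h)
    rwa [hge] at this

end Ranges

section Proj

open Metric

variable {X A : Type*} [MetricSpace X] [CompactSpace X] [MeasurableSpace X] [BorelSpace X]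
  [MetricSpace A] [CompactSpace A] [Nonempty A] [MeasurableSpace A] [BorelSpace A]

/-- **Novikov's projection theorem** (special case): the projection of a Borel set with closed
sections in a product of compact metric spaces is Borel. -/
theorem measurableSet_exists_of_closed_sections {E : Set (X × A)} (hE : MeasurableSet E)
    (hsec : ∀ x, IsClosed {a | (x, a) ∈ E}) :
    MeasurableSet {x | ∃ a, (x, a) ∈ E} := by
  classical
  -- countable family of balls
  let b : ℕ → A := TopologicalSpace.denseSeq A
  have hb : DenseRange b := TopologicalSpace.denseRange_denseSeq A
  let rad : ℕ → ℝ := fun k => 1 / ((Nat.unpair k).2 + 1)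
  have hradpos : ∀ k, 0 < rad k := fun k => by positivity
  let ctr : ℕ → A := fun k => b (Nat.unpair k).1
  let OB : ℕ → Set A := fun k => ball (ctr k) (rad k)
  let CB : ℕ → Set A := fun k => closedBall (ctr k) (rad k)
  -- analytic sets
  let A' : ℕ → Set X := fun k => Prod.fst '' (E ∩ (univ ×ˢ CB k))
  have hA' : ∀ k, AnalyticSet (A' k) := by
    intro k
    exact (hE.inter (MeasurableSet.univ.prod isClosed_closedBall.measurableSet)).analyticSet_image
      measurable_fst
  have hmemA' : ∀ k x, x ∈ A' k ↔ ∃ a ∈ CB k, (x, a) ∈ E := by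
    intro k x
    constructor
    · rintro ⟨⟨x', a⟩, ⟨hpE, -, hpC⟩, rfl⟩
      exact ⟨a, hpC, hpE⟩
    · rintro ⟨a, haC, haE⟩
      exact ⟨(x, a), ⟨haE, trivial, haC⟩, rfl⟩
  -- the key covering property
  have hcover : ∀ x a, (x, a) ∉ E → ∃ k, a ∈ OB k ∧ x ∉ A' k := by
    intro x a ha
    have hopen : IsOpen {z : A | (x, z) ∈ E}ᶜ := (hsec x).isOpen_compl
    obtain ⟨ε, εpos, hε⟩ := Metric.isOpen_iff.1 hopen a ha
    obtain ⟨mq, hmq⟩ : ∃ mq : ℕ, 1 / ((mq : ℝ) + 1) < ε / 2 :=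
      exists_nat_one_div_lt (by positivity)
    obtain ⟨i, hi⟩ : ∃ i, dist (b i) a < 1 / ((mq : ℝ) + 1) := by
      have := Metric.denseRange_iff.1 hb a (1 / ((mq : ℝ) + 1)) (by positivity)
      obtain ⟨i, hi⟩ := this
      exact ⟨i, by rwa [dist_comm]⟩
    refine ⟨Nat.pair i mq, ?_, ?_⟩
    · show a ∈ ball (ctr (Nat.pair i mq)) (rad (Nat.pair i mq))
      simp only [OB, ctr, rad, Nat.unpair_pair, mem_ball]
      rwa [dist_comm]
    · intro hxA
      rw [hmemA'] at hxA
      obtain ⟨z, hzC, hzE⟩ := hxA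
      apply hε ?_ hzE
      show z ∈ ball a ε
      simp only [CB, ctr, rad, Nat.unpair_pair, mem_closedBall] at hzC
      rw [mem_ball]
      calc dist z a ≤ dist z (b i) + dist (b i) a := dist_triangle _ _ _
        _ ≤ 1 / ((mq : ℝ) + 1) + 1 / ((mq : ℝ) + 1) := add_le_add hzC hi.le
        _ < ε / 2 + ε / 2 := by linarith
        _ = ε := by ring
  -- apply Novikov separation in X × A
  let s : ℕ → Set (X × A) := fun n =>
    Nat.rec Eᶜ (fun k _ => (Prod.fst ⁻¹' A' k) ∪ (Prod.snd ⁻¹' (OB k)ᶜ)) n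
  have hs0 : s 0 = Eᶜ := rfl
  have hsk : ∀ k, s (k + 1) = (Prod.fst ⁻¹' A' k) ∪ (Prod.snd ⁻¹' (OB k)ᶜ) := fun k => rfl
  have hsana : ∀ n, AnalyticSet (s n) := by
    intro n
    cases n with
    | zero => exact hE.compl.analyticSet
    | succ k =>
      rw [hsk]
      have h1 : AnalyticSet (Prod.fst ⁻¹' A' k : Set (X × A)) :=
        (hA' k).preimage continuous_fst
      have h2 : AnalyticSet (Prod.snd ⁻¹' (OB k)ᶜ : Set (X × A)) :=
        (isOpen_ball.isClosed_compl.analyticSet).preimage continuous_snd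
      rw [Set.union_eq_iUnion]
      refine AnalyticSet.iUnion ?_
      rintro (_ | _)
      · exact h2
      · exact h1
  have hsempty : (⋂ n, s n) = ∅ := by
    ext ⟨x, a⟩
    simp only [mem_iInter, mem_empty_iff_false, iff_false]
    intro hp
    have h0 := hp 0
    rw [hs0] at h0
    obtain ⟨k, hk1, hk2⟩ := hcover x a h0
    have hk := hp (k + 1)
    rw [hsk] at hk
    rcases hk with hk | hk
    · exact hk2 hk
    · exact hk hk1
  obtain ⟨Bsep, hBsub, hBmeas, hBempty⟩ := sepFam_of_analytic hsana hsempty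
  -- the pieces D k ⊆ (A' k)ᶜ ×ˢ OB k covering Eᶜ
  let D : ℕ → Set (X × A) := fun k => Eᶜ ∩ (Bsep (k + 1))ᶜ
  have hDmeas : ∀ k, MeasurableSet (D k) := fun k => hE.compl.inter (hBmeas (k + 1)).compl
  have hDsub : ∀ k, D k ⊆ (Prod.fst ⁻¹' (A' k)ᶜ) ∩ (Prod.snd ⁻¹' OB k) := by
    intro k p hp
    have : p ∉ (Prod.fst ⁻¹' A' k) ∪ (Prod.snd ⁻¹' (OB k)ᶜ) := by
      intro hmem
      exact hp.2 (hBsub (k + 1) (by rwa [hsk]))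
    constructor
    · intro hc; exact this (Or.inl hc)
    · by_contra hc; exact this (Or.inr hc)
  have hDcover : Eᶜ ⊆ ⋃ k, D k := by
    intro p hp
    by_contra hc
    simp only [mem_iUnion, not_exists, D, mem_inter_iff, not_and, mem_compl_iff, not_not] at hc
    have : p ∈ ⋂ n, Bsep n := by
      refine mem_iInter.2 fun n => ?_
      cases n with
      | zero => exact hBsub 0 (by rwa [hs0])
      | succ k => exact hc k hp
    rw [hBempty] at this
    exact this
  -- Lusin separation of the analytic projections from A' k
  have hsep : ∀ k, ∃ Bk : Set X, Prod.fst '' D k ⊆ Bk ∧ Disjoint (A' k) Bk ∧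
      MeasurableSet Bk := by
    intro k
    have hana : AnalyticSet (Prod.fst '' D k) := (hDmeas k).analyticSet_image measurable_fst
    have hdisj : Disjoint (Prod.fst '' D k) (A' k) := by
      rw [disjoint_left]
      rintro x ⟨p, hpD, rfl⟩ hxA
      exact (hDsub k hpD).1 hxA
    exact hana.measurablySeparable (hA' k) hdisj
  choose Bk hBk1 hBk2 hBk3 using hsep
  -- the final description
  have hBkC : ∀ k x, x ∈ Bk k → ∀ a ∈ CB k, (x, a) ∉ E := by
    intro k x hx a haC haE
    have : x ∈ A' k := (hmemA' k x).2 ⟨a, haC, haE⟩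
    exact (disjoint_left.1 (hBk2 k)) this hx
  set T : Set X := ⋃ (F : Finset ℕ) (_ : (univ : Set A) ⊆ ⋃ k ∈ F, OB k), ⋂ k ∈ F, Bk k
    with hT
  have hTmeas : MeasurableSet T := by
    refine MeasurableSet.iUnion fun F => ?_
    refine MeasurableSet.iUnion fun _ => ?_
    exact MeasurableSet.iInter fun k => MeasurableSet.iInter fun _ => hBk3 k
  have hT1 : ∀ x ∈ T, ∀ a : A, (x, a) ∉ E := by
    intro x hx a haE
    rw [hT, mem_iUnion] at hx
    obtain ⟨F, hx⟩ := hx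
    rw [mem_iUnion] at hx
    obtain ⟨hFcov, hx⟩ := hx
    obtain ⟨k, hkF, hka⟩ : ∃ k ∈ F, a ∈ OB k := by
      have := hFcov (mem_univ a)
      simpa using this
    have hxk : x ∈ Bk k := mem_iInter₂.1 hx k hkF
    exact hBkC k x hxk a (ball_subset_closedBall hka) haE
  have hT2 : ∀ x : X, (∀ a : A, (x, a) ∉ E) → x ∈ T := by
    intro x hne
    classical
    have hsec' : ∀ a : A, ∃ k, a ∈ OB k ∧ x ∈ Bk k := by
      intro a
      have hpc : (x, a) ∈ Eᶜ := hne a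
      obtain ⟨k, hk⟩ := mem_iUnion.1 (hDcover hpc)
      refine ⟨k, (hDsub k hk).2, hBk1 k ⟨(x, a), hk, rfl⟩⟩
    have hcov : (univ : Set A) ⊆ ⋃ k, (if x ∈ Bk k then OB k else ∅) := by
      intro a _
      obtain ⟨k, hk1, hk2⟩ := hsec' a
      exact mem_iUnion.2 ⟨k, by simp only [if_pos hk2]; exact hk1⟩
    have hopen : ∀ k, IsOpen (if x ∈ Bk k then OB k else ∅) := by
      intro k
      by_cases h : x ∈ Bk k
      · simp only [if_pos h]; exact isOpen_ball
      · simp only [if_neg h]; exact isOpen_empty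
    obtain ⟨F, hF⟩ := isCompact_univ.elim_finite_subcover
      (fun k => (if x ∈ Bk k then OB k else ∅)) hopen hcov
    rw [hT, mem_iUnion]
    refine ⟨F.filter (fun k => x ∈ Bk k), ?_⟩
    rw [mem_iUnion]
    refine ⟨?_, ?_⟩
    · intro a ha
      have := hF ha
      simp only [mem_iUnion] at this ⊢
      obtain ⟨k, hkF, hk⟩ := this
      by_cases hxB : x ∈ Bk k
      · rw [if_pos hxB] at hk
        exact ⟨k, Finset.mem_filter.2 ⟨hkF, hxB⟩, hk⟩
      · rw [if_neg hxB] at hk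
        exact absurd hk (notMem_empty a)
    · refine mem_iInter₂.2 fun k hk => ?_
      exact (Finset.mem_filter.1 hk).2
  have key : {x | ∃ a, (x, a) ∈ E} = Tᶜ := by
    ext x
    simp only [mem_setOf_eq, mem_compl_iff]
    constructor
    · rintro ⟨a, haE⟩ hxT
      exact hT1 x hxT a haE
    · intro hxT
      by_contra hne
      push_neg at hne
      exact hxT (hT2 x hne)
  rw [key]
  exact hTmeas.compl

end Proj


/-- The set `𝕌`: upper semicontinuous functions `u : X → [0, c̄/(1-γ)]`. -/
def memU {X : Type*} [TopologicalSpace X] (cbar γ : ℝ) (u : X → ℝ) : Prop :=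
  UpperSemicontinuous u ∧ ∀ x, u x ∈ Set.Icc (0 : ℝ) (cbar / (1 - γ))

/-- The inner operator `H^a`:
`(H^a u)(x) = inf_{λ ≥ 0} [ c(x,a) + γλδ + γ ∫ sup_z (u(z) - λ κ(z,y)) P(dy|x,a) ]`. -/
noncomputable def Ha {X A : Type*} [MeasurableSpace X] [MeasurableSpace A]
    (c : X → A → ℝ) (γ δ : ℝ) (κ : X → X → ℝ) (P : Kernel (X × A) X)
    (u : X → ℝ) (x : X) (a : A) : ℝ :=
  ⨅ l : {l : ℝ // 0 ≤ l},
    (c x a + γ * l.1 * δ + γ * ∫ y, (⨆ z, (u z - l.1 * κ z y)) ∂(P (x, a)))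

/-- The robust Bellman operator `H`:
`(H u)(x) = inf_{a ∈ A, λ ≥ 0} [ c(x,a) + γλδ + γ ∫ sup_z (u(z) - λ κ(z,y)) P(dy|x,a) ]`. -/
noncomputable def Hop {X A : Type*} [MeasurableSpace X] [MeasurableSpace A]
    (c : X → A → ℝ) (γ δ : ℝ) (κ : X → X → ℝ) (P : Kernel (X × A) X)
    (u : X → ℝ) (x : X) : ℝ :=
  ⨅ a : A, Ha c γ δ κ P u x a

/-- Theorem 1: under Assumption 1 (measurability of `(x,a) ↦ (H^a u)(x)` and lower
semicontinuity in `a`), there exists a deterministic Markov stationary policy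
`f : X → A` with `H^{f(x)} u* = H u* = u*`. -/
theorem exists_deterministic_stationary_optimal_policy
    {X A : Type*} [MetricSpace X] [CompactSpace X] [Nonempty X]
    [MeasurableSpace X] [BorelSpace X]
    [MetricSpace A] [CompactSpace A] [Nonempty A] [MeasurableSpace A] [BorelSpace A]
    (c : X → A → ℝ) (hc : Continuous fun p : X × A => c p.1 p.2)
    (cbar : ℝ) (hcbar : 0 ≤ cbar)
    (hc0 : ∀ x a, 0 ≤ c x a) (hcb : ∀ x a, c x a ≤ cbar)
    (γ : ℝ) (hγ0 : 0 < γ) (hγ1 : γ < 1) (δ : ℝ) (hδ : 0 ≤ δ)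
    (κ : X → X → ℝ) (hκc : Continuous fun p : X × X => κ p.1 p.2)
    (hκ0 : ∀ z y, 0 ≤ κ z y) (hκeq : ∀ z y, κ z y = 0 ↔ z = y)
    (P : Kernel (X × A) X) [IsMarkovKernel P]
    -- Assumption 1:
    (hmeas : ∀ u : X → ℝ, memU cbar γ u →
      Measurable fun p : X × A => Ha c γ δ κ P u p.1 p.2)
    (hlsc : ∀ u : X → ℝ, memU cbar γ u → ∀ x : X,
      LowerSemicontinuous fun a : A => Ha c γ δ κ P u x a)
    -- u* is the unique fixed point of H in 𝕌:
    (ustar : X → ℝ) (hustar : memU cbar γ ustar)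
    (hfix : Hop c γ δ κ P ustar = ustar)
    (huniq : ∀ v : X → ℝ, memU cbar γ v → Hop c γ δ κ P v = v → v = ustar) :
    ∃ f : X → A, Measurable f ∧
      ∀ x, Ha c γ δ κ P ustar x (f x) = Hop c γ δ κ P ustar x ∧
        Hop c γ δ κ P ustar x = ustar x := by
  classical
  have hum : Measurable ustar := hustar.1.measurable
  have hHx : ∀ x, Hop c γ δ κ P ustar x = ustar x := fun x => congrFun hfix x
  -- nonnegativity of Ha
  have hg0 : ∀ x a, 0 ≤ Ha c γ δ κ P ustar x a := by
    intro x a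
    refine le_ciInf fun l => ?_
    have h1 : 0 ≤ c x a := hc0 x a
    have h2 : 0 ≤ γ * l.1 * δ := mul_nonneg (mul_nonneg hγ0.le l.2) hδ
    have h3 : 0 ≤ ∫ y, (⨆ z, (ustar z - l.1 * κ z y)) ∂(P (x, a)) := by
      refine integral_nonneg fun y => ?_
      have hbdd : BddAbove (Set.range fun z => ustar z - l.1 * κ z y) := by
        refine ⟨cbar / (1 - γ), ?_⟩
        rintro ρ ⟨z, rfl⟩
        have hz1 := (hustar.2 z).2
        have hz2 : 0 ≤ l.1 * κ z y := mul_nonneg l.2 (hκ0 z y)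
        simp only
        linarith
      have hy : ustar y - l.1 * κ y y ≤ ⨆ z, (ustar z - l.1 * κ z y) := le_ciSup hbdd y
      rw [(hκeq y y).2 rfl, mul_zero, sub_zero] at hy
      exact le_trans (hustar.2 y).1 hy
    have h4 : 0 ≤ γ * ∫ y, (⨆ z, (ustar z - l.1 * κ z y)) ∂(P (x, a)) :=
      mul_nonneg hγ0.le h3
    linarith
  have hbb : ∀ x, BddBelow (Set.range fun a => Ha c γ δ κ P ustar x a) := by
    intro x
    exact ⟨0, by rintro ρ ⟨a, rfl⟩; exact hg0 x a⟩
  -- the minimum of a ↦ Ha is attained (value = ustar x)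
  have hargmin : ∀ x, ∃ a, Ha c γ δ κ P ustar x a ≤ ustar x := by
    intro x
    have hlscx := hlsc ustar hustar x
    set gx := fun a => Ha c γ δ κ P ustar x a with hgx
    have hCne : ∀ n : ℕ, {a | gx a ≤ ustar x + 1 / ((n : ℝ) + 1)}.Nonempty := by
      intro n
      by_contra hcon
      rw [Set.not_nonempty_iff_eq_empty] at hcon
      have hforall : ∀ a, ustar x + 1 / ((n : ℝ) + 1) ≤ gx a := by
        intro a
        have hna := Set.eq_empty_iff_forall_notMem.1 hcon a
        simp only [Set.mem_setOf_eq, not_le] at hna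
        exact hna.le
      have h5 : ustar x + 1 / ((n : ℝ) + 1) ≤ Hop c γ δ κ P ustar x := le_ciInf hforall
      rw [hHx x] at h5
      have hpos : 0 < 1 / ((n : ℝ) + 1) := by positivity
      linarith
    have hclosed : ∀ n : ℕ, IsClosed {a | gx a ≤ ustar x + 1 / ((n : ℝ) + 1)} := by
      intro n
      exact hlscx.isClosed_preimage _
    obtain ⟨a, ha⟩ := IsCompact.nonempty_iInter_of_sequence_nonempty_isCompact_isClosed
      (fun n => {a | gx a ≤ ustar x + 1 / ((n : ℝ) + 1)})
      (by
        intro n a ha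
        simp only [Set.mem_setOf_eq] at ha ⊢
        have h1 : (1 : ℝ) / ((n : ℝ) + 1 + 1) ≤ 1 / ((n : ℝ) + 1) :=
          one_div_le_one_div_of_le (by positivity) (by linarith)
        push_cast at ha
        linarith) hCne
      ((hclosed 0).isCompact) hclosed
    refine ⟨a, ?_⟩
    have hmem : ∀ n : ℕ, gx a ≤ ustar x + 1 / ((n : ℝ) + 1) := fun n => mem_iInter.1 ha n
    by_contra hgt
    push_neg at hgt
    obtain ⟨n, hn⟩ := exists_nat_one_div_lt (sub_pos.2 hgt)
    have := hmem n
    simp only [hgx] at this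
    linarith
  -- measurability of the "good" sets
  have hSK : ∀ K : Set A, IsClosed K →
      MeasurableSet {x | ∃ a ∈ K, Ha c γ δ κ P ustar x a ≤ ustar x} := by
    intro K hK
    have hE : MeasurableSet {p : X × A | p.2 ∈ K ∧ Ha c γ δ κ P ustar p.1 p.2 ≤ ustar p.1} := by
      refine MeasurableSet.inter ?_ ?_
      · exact measurable_snd hK.measurableSet
      · exact measurableSet_le (hmeas ustar hustar) (hum.comp measurable_fst)
    have hsec : ∀ x, IsClosed {a | (x, a) ∈
        {p : X × A | p.2 ∈ K ∧ Ha c γ δ κ P ustar p.1 p.2 ≤ ustar p.1}} := by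
      intro x
      have heq : {a | (x, a) ∈
          {p : X × A | p.2 ∈ K ∧ Ha c γ δ κ P ustar p.1 p.2 ≤ ustar p.1}}
          = K ∩ {a | Ha c γ δ κ P ustar x a ≤ ustar x} := rfl
      rw [heq]
      exact hK.inter ((hlsc ustar hustar x).isClosed_preimage _)
    exact measurableSet_exists_of_closed_sections hE hsec
  -- the selection scheme: nested closed balls around dense points
  let b : ℕ → A := TopologicalSpace.denseSeq A
  have hb : DenseRange b := TopologicalSpace.denseRange_denseSeq A
  let r : ℕ → ℝ := fun n => (1 / 2 : ℝ) ^ n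
  have hrpos : ∀ n, 0 < r n := fun n => by positivity
  have hrmono : ∀ {n m : ℕ}, n ≤ m → r m ≤ r n := fun {n m} h =>
    pow_le_pow_of_le_one (by norm_num) (by norm_num) h
  have hrlim : Filter.Tendsto r Filter.atTop (nhds 0) :=
    tendsto_pow_atTop_nhds_zero_of_lt_one (by norm_num) (by norm_num)
  let Good : X → Set A → Prop := fun x K => ∃ a ∈ K, Ha c γ δ κ P ustar x a ≤ ustar x
  let idx : X → ℕ → Set A → ℕ := fun x n K =>
    sInf {i | Good x (K ∩ Metric.closedBall (b i) (r (n + 1)))}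
  let Kse : X → ℕ → Set A := fun x => Nat.rec (motive := fun _ => Set A) Set.univ
    (fun n K => K ∩ Metric.closedBall (b (idx x n K)) (r (n + 1)))
  have hKrec : ∀ x n, Kse x (n + 1)
      = Kse x n ∩ Metric.closedBall (b (idx x n (Kse x n))) (r (n + 1)) := fun x n => rfl
  let I : X → ℕ → ℕ := fun x n => idx x n (Kse x n)
  -- the invariant
  have hGoodK : ∀ x n, Good x (Kse x n) ∧ IsClosed (Kse x n) := by
    intro x n
    induction n with
    | zero =>
      refine ⟨?_, isClosed_univ⟩
      obtain ⟨a, ha⟩ := hargmin x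
      exact ⟨a, Set.mem_univ a, ha⟩
    | succ n IH =>
      obtain ⟨⟨a, haK, hag⟩, hcl⟩ := IH
      have hne : {i | Good x (Kse x n ∩ Metric.closedBall (b i) (r (n + 1)))}.Nonempty := by
        obtain ⟨i, hi⟩ := Metric.denseRange_iff.1 hb a (r (n + 1)) (hrpos (n + 1))
        exact ⟨i, a, ⟨haK, Metric.mem_closedBall.2 hi.le⟩, hag⟩
      have hmem := Nat.sInf_mem hne
      exact ⟨hmem, hcl.inter Metric.isClosed_closedBall⟩
  -- prefix sets
  let Kpref : (ℕ → ℕ) → ℕ → Set A := fun v => Nat.rec (motive := fun _ => Set A) Set.univ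
    (fun n K => K ∩ Metric.closedBall (b (v n)) (r (n + 1)))
  have hKpref_congr : ∀ (v w : ℕ → ℕ) n, (∀ m, m < n → v m = w m) → Kpref v n = Kpref w n := by
    intro v w n h
    induction n with
    | zero => rfl
    | succ n IH =>
      show Kpref v n ∩ _ = Kpref w n ∩ _
      rw [IH (fun m hm => h m (hm.trans (Nat.lt_succ_self n))), h n (Nat.lt_succ_self n)]
  have hKprefClosed : ∀ v n, IsClosed (Kpref v n) := by
    intro v n
    induction n with
    | zero => exact isClosed_univ
    | succ n IH => exact IH.inter Metric.isClosed_closedBall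
  have hKeq : ∀ x n, Kse x n = Kpref (I x) n := by
    intro x n
    induction n with
    | zero => rfl
    | succ n IH =>
      show Kse x n ∩ _ = Kpref (I x) n ∩ _
      rw [IH]
  -- measurability of prefix cylinders
  have hD : ∀ n (v : ℕ → ℕ), MeasurableSet {x | ∀ m, m < n → I x m = v m} := by
    intro n
    induction n with
    | zero =>
      intro v
      have : {x : X | ∀ m, m < 0 → I x m = v m} = Set.univ := by
        ext x; simp
      rw [this]; exact MeasurableSet.univ
    | succ n IH =>
      intro v
      have hGm : MeasurableSet ({x | Good x (Kpref v n ∩ Metric.closedBall (b (v n)) (r (n + 1)))}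
          ∩ ⋂ (j : ℕ) (_ : j < v n),
            {x | Good x (Kpref v n ∩ Metric.closedBall (b j) (r (n + 1)))}ᶜ) := by
        refine MeasurableSet.inter ?_ ?_
        · exact hSK _ ((hKprefClosed v n).inter Metric.isClosed_closedBall)
        · exact MeasurableSet.iInter fun j => MeasurableSet.iInter fun _ =>
            (hSK _ ((hKprefClosed v n).inter Metric.isClosed_closedBall)).compl
      have hsplit : {x | ∀ m, m < n + 1 → I x m = v m}
          = {x | ∀ m, m < n → I x m = v m}
            ∩ ({x | Good x (Kpref v n ∩ Metric.closedBall (b (v n)) (r (n + 1)))}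
              ∩ ⋂ (j : ℕ) (_ : j < v n),
                {x | Good x (Kpref v n ∩ Metric.closedBall (b j) (r (n + 1)))}ᶜ) := by
        ext x
        simp only [Set.mem_inter_iff, Set.mem_setOf_eq, Set.mem_iInter, Set.mem_compl_iff]
        constructor
        · intro hx
          have h1 : ∀ m, m < n → I x m = v m := fun m hm => hx m (hm.trans (Nat.lt_succ_self n))
          have hKv : Kse x n = Kpref v n := by
            rw [hKeq x n]
            exact hKpref_congr _ _ n h1
          have hIn : I x n = v n := hx n (Nat.lt_succ_self n)
          refine ⟨h1, ?_, ?_⟩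
          · obtain ⟨a, haK, hag⟩ := (hGoodK x (n + 1)).1
            rw [hKrec x n] at haK
            refine ⟨a, ⟨?_, ?_⟩, hag⟩
            · rw [← hKv]; exact haK.1
            · rw [← hIn]; exact haK.2
          · intro j hj
            have hIn' : sInf {i | Good x (Kse x n ∩ Metric.closedBall (b i) (r (n + 1)))}
                = v n := hIn
            have hnm : j ∉ {i | Good x (Kse x n ∩ Metric.closedBall (b i) (r (n + 1)))} :=
              Nat.notMem_of_lt_sInf (by rw [hIn']; exact hj)
            intro hcon
            apply hnm
            show Good x (Kse x n ∩ Metric.closedBall (b j) (r (n + 1)))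
            rw [hKv]
            exact hcon
        · rintro ⟨h1, h2, h3⟩
          have hKv : Kse x n = Kpref v n := by
            rw [hKeq x n]
            exact hKpref_congr _ _ n h1
          intro m hm
          rcases Nat.lt_succ_iff_lt_or_eq.1 hm with hm' | hm'
          · exact h1 m hm'
          · subst hm'
            show idx x m (Kse x m) = v m
            have hmemS : v m ∈ {i | Good x (Kse x m ∩ Metric.closedBall (b i) (r (m + 1)))} := by
              rw [hKv]; exact h2
            refine le_antisymm (Nat.sInf_le hmemS) ?_
            by_contra hlt
            push_neg at hlt
            have hsm := Nat.sInf_mem ⟨v m, hmemS⟩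
            have := h3 _ hlt
            rw [← hKv] at this
            exact this hsm
      rw [hsplit]
      exact (IH v).inter hGm
  -- measurability of the chosen indices
  have hImeas : ∀ n, Measurable fun x => I x n := by
    intro n
    refine measurable_to_countable' fun i => ?_
    have heq : (fun x => I x n) ⁻¹' {i}
        = ⋃ v : Fin n → ℕ, {x | ∀ m, m < n + 1 →
            I x m = (fun m => if h : m < n then v ⟨m, h⟩ else i) m} := by
      ext x
      simp only [Set.mem_preimage, Set.mem_singleton_iff, Set.mem_iUnion, Set.mem_setOf_eq]
      constructor
      · intro hx
        refine ⟨fun m => I x m.1, fun m hm => ?_⟩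
        by_cases hmn : m < n
        · simp [hmn]
        · have : m = n := by omega
          subst this
          simp [hmn, hx]
      · rintro ⟨v, hv⟩
        have := hv n (Nat.lt_succ_self n)
        simpa using this
    rw [heq]
    exact MeasurableSet.iUnion fun v => hD (n + 1) _
  -- the approximating measurable functions
  have hfnmeas : ∀ n, Measurable fun x => b (I x n) :=
    fun n => measurable_from_top.comp (hImeas n)
  -- witnesses in the nested sets
  have hwit : ∀ x n, ∃ a, a ∈ Kse x (n + 1) ∧ Ha c γ δ κ P ustar x a ≤ ustar x := by
    intro x n
    obtain ⟨a, ha1, ha2⟩ := (hGoodK x (n + 1)).1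
    exact ⟨a, ha1, ha2⟩
  choose w hw1 hw2 using hwit
  have hKmono : ∀ x {n m : ℕ}, n ≤ m → Kse x m ⊆ Kse x n := by
    intro x n m h
    induction m, h using Nat.le_induction with
    | base => exact subset_rfl
    | succ m hm IH =>
      refine Set.Subset.trans ?_ IH
      rw [hKrec x m]
      exact Set.inter_subset_left
  have hwball : ∀ x n m, n ≤ m → dist (w x m) (b (I x n)) ≤ r (n + 1) := by
    intro x n m hnm
    have h1 : w x m ∈ Kse x (n + 1) := hKmono x (Nat.succ_le_succ hnm) (hw1 x m)
    rw [hKrec x n] at h1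
    exact Metric.mem_closedBall.1 h1.2
  -- Cauchy property and the limit policy
  have hcauchy : ∀ x, CauchySeq fun n => b (I x n) := by
    intro x
    refine cauchySeq_of_le_tendsto_0 (fun N => 2 * r (N + 1)) (fun n m N hn hm => ?_) ?_
    · have h1 : dist (w x (max n m)) (b (I x n)) ≤ r (n + 1) :=
        hwball x n (max n m) (le_max_left _ _)
      have h2 : dist (w x (max n m)) (b (I x m)) ≤ r (m + 1) :=
        hwball x m (max n m) (le_max_right _ _)
      have h3 : r (n + 1) ≤ r (N + 1) := hrmono (Nat.succ_le_succ hn)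
      have h4 : r (m + 1) ≤ r (N + 1) := hrmono (Nat.succ_le_succ hm)
      calc dist (b (I x n)) (b (I x m))
          ≤ dist (b (I x n)) (w x (max n m)) + dist (w x (max n m)) (b (I x m)) :=
            dist_triangle _ _ _
        _ ≤ r (N + 1) + r (N + 1) := by rw [dist_comm] at h1; linarith
        _ = 2 * r (N + 1) := by ring
    · have : Filter.Tendsto (fun N : ℕ => r (N + 1)) Filter.atTop (nhds 0) :=
        hrlim.comp (Filter.tendsto_add_atTop_nat 1)
      simpa using this.const_mul 2
  have hlim : ∀ x, ∃ a : A, Filter.Tendsto (fun n => b (I x n)) Filter.atTop (nhds a) :=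
    fun x => cauchySeq_tendsto_of_complete (hcauchy x)
  choose f hf using hlim
  have hfmeas : Measurable f := by
    refine measurable_of_tendsto_metrizable' Filter.atTop hfnmeas ?_
    rw [tendsto_pi_nhds]
    exact hf
  -- the witnesses converge to the limit
  have hwtend : ∀ x, Filter.Tendsto (fun n => w x n) Filter.atTop (nhds (f x)) := by
    intro x
    rw [tendsto_iff_dist_tendsto_zero]
    refine squeeze_zero (fun n => dist_nonneg) (fun n => ?_)
      (g := fun n => r (n + 1) + dist (b (I x n)) (f x)) ?_
    · calc dist (w x n) (f x) ≤ dist (w x n) (b (I x n)) + dist (b (I x n)) (f x) :=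
          dist_triangle _ _ _
        _ ≤ r (n + 1) + dist (b (I x n)) (f x) := by
            have := hwball x n n le_rfl
            linarith
    · have h1 : Filter.Tendsto (fun n : ℕ => r (n + 1)) Filter.atTop (nhds 0) :=
        hrlim.comp (Filter.tendsto_add_atTop_nat 1)
      have h2 : Filter.Tendsto (fun n => dist (b (I x n)) (f x)) Filter.atTop (nhds 0) :=
        tendsto_iff_dist_tendsto_zero.1 (hf x)
      simpa using h1.add h2
  -- conclusion
  refine ⟨f, hfmeas, fun x => ?_⟩
  have hle : Ha c γ δ κ P ustar x (f x) ≤ ustar x := by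
    by_contra hgt
    push_neg at hgt
    have hev := hlsc ustar hustar x (f x) (ustar x) hgt
    have := ((hwtend x).eventually hev).exists
    obtain ⟨n, hn⟩ := this
    exact absurd (hw2 x n) (not_le.2 hn)
  have hge : Hop c γ δ κ P ustar x ≤ Ha c γ δ κ P ustar x (f x) := ciInf_le (hbb x) (f x)
  refine ⟨le_antisymm (hle.trans (hHx x).symm.le) hge, hHx x⟩
end

section
/- (Strong duality.) Let X be a compact metric space, u : X → ℝ upper semicontinuous and bounded, P a Borel probability measure on X, κ : X × X → [0,∞) continuous with κ(z,y) = 0 if and only if z = y, and δ > 0. Then sup { ∫_X u dQ : Q a Borel probability measure on X with D_κ(Q,P) ≤ δ } = inf over λ ≥ 0 of [ λδ + ∫_X sup_{z ∈ X} (u(z) − λκ(z,y)) P(dy) ]. -/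
open MeasureTheory

/-- The optimal transport cost `D_κ(Q,P)`: the infimum over couplings `ξ` of `Q` and `P`
of the total transport cost `∫ κ dξ`. -/
noncomputable def transportCost {X : Type*} [MeasurableSpace X]
    (κ : X → X → ℝ) (Q P : Measure X) : ℝ :=
  sInf { r : ℝ | ∃ ξ : Measure (X × X), IsProbabilityMeasure ξ ∧
    ξ.map Prod.fst = Q ∧ ξ.map Prod.snd = P ∧ r = ∫ p, κ p.1 p.2 ∂ξ }

set_option linter.unusedSectionVars false

section Aux
variable {X : Type*} [MetricSpace X] [CompactSpace X] [Nonempty X]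
  [MeasurableSpace X] [BorelSpace X]

/-- bounded measurable functions are integrable on finite measures. -/
lemma integrable_of_bdd {α : Type*} [MeasurableSpace α] {μ : Measure α} [IsFiniteMeasure μ]
    {f : α → ℝ} {C : ℝ} (hf : AEStronglyMeasurable f μ) (hb : ∀ x, |f x| ≤ C) :
    Integrable f μ :=
  Integrable.mono' (integrable_const C) hf
    (Filter.Eventually.of_forall fun x => by simpa [Real.norm_eq_abs] using hb x)

noncomputable def phi (u : X → ℝ) (κ : X → X → ℝ) (l : ℝ) (y : X) : ℝ :=
  ⨆ z, (u z - l * κ z y)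

variable {u : X → ℝ} {κ : X → X → ℝ} {l : ℝ} {M : ℝ}

lemma phi_bdd (hM : ∀ x, |u x| ≤ M) (hκ0 : ∀ z y, 0 ≤ κ z y) (hl : 0 ≤ l) (y : X) :
    BddAbove (Set.range fun z => u z - l * κ z y) := by
  refine ⟨M, ?_⟩
  rintro r ⟨z, rfl⟩
  show u z - l * κ z y ≤ M
  have := (abs_le.1 (hM z)).2
  nlinarith [mul_nonneg hl (hκ0 z y)]

lemma le_phi (hM : ∀ x, |u x| ≤ M) (hκ0 : ∀ z y, 0 ≤ κ z y) (hl : 0 ≤ l) (z y : X) :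
    u z - l * κ z y ≤ phi u κ l y :=
  le_ciSup (phi_bdd hM hκ0 hl y) z

lemma phi_le (hM : ∀ x, |u x| ≤ M) (hκ0 : ∀ z y, 0 ≤ κ z y) (hl : 0 ≤ l) (y : X) :
    phi u κ l y ≤ M :=
  ciSup_le fun z => by
    have := (abs_le.1 (hM z)).2
    nlinarith [mul_nonneg hl (hκ0 z y)]

lemma u_le_phi (hM : ∀ x, |u x| ≤ M) (hκ0 : ∀ z y, 0 ≤ κ z y)
    (hκeq : ∀ z y, κ z y = 0 ↔ z = y) (hl : 0 ≤ l) (y : X) :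
    u y ≤ phi u κ l y := by
  have h := le_phi hM hκ0 hl y y (u := u)
  rwa [(hκeq y y).2 rfl, mul_zero, sub_zero] at h

lemma phi_abs_le (hM : ∀ x, |u x| ≤ M) (hκ0 : ∀ z y, 0 ≤ κ z y)
    (hκeq : ∀ z y, κ z y = 0 ↔ z = y) (hl : 0 ≤ l) (y : X) :
    |phi u κ l y| ≤ M := by
  rw [abs_le]
  exact ⟨le_trans (abs_le.1 (hM y)).1 (u_le_phi hM hκ0 hκeq hl y), phi_le hM hκ0 hl y⟩

/-- modulus transfer : if `κ (·) y` and `κ (·) y'` are uniformly `c`-close, then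
`phi` values are `l*c` close. -/
lemma phi_mod (hM : ∀ x, |u x| ≤ M) (hκ0 : ∀ z y, 0 ≤ κ z y) (hl : 0 ≤ l)
    {y y' : X} {c : ℝ} (h : ∀ z, |κ z y - κ z y'| ≤ c) :
    phi u κ l y ≤ phi u κ l y' + l * c := by
  refine ciSup_le fun z => ?_
  have h1 := (abs_le.1 (h z)).1
  have h2 := le_phi hM hκ0 hl z y' (u := u)
  have h3 := mul_le_mul_of_nonneg_left h1 hl
  nlinarith

/-- uniform modulus for κ. -/
lemma kappa_unif (hκc : Continuous fun p : X × X => κ p.1 p.2) :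
    ∀ ε > (0:ℝ), ∃ η > (0:ℝ), ∀ y y' z : X, dist y y' < η → |κ z y - κ z y'| ≤ ε := by
  intro ε hε
  have huc : UniformContinuous fun p : X × X => κ p.1 p.2 :=
    CompactSpace.uniformContinuous_of_continuous hκc
  obtain ⟨η, hη, hmod⟩ := Metric.uniformContinuous_iff.1 huc ε hε
  refine ⟨η, hη, fun y y' z hd => ?_⟩
  have : dist ((z, y) : X × X) (z, y') < η := by
    simp [Prod.dist_eq, hd, hη]
  have := hmod this
  rw [Real.dist_eq] at this
  exact this.le

lemma phi_continuous (hM : ∀ x, |u x| ≤ M) (hκ0 : ∀ z y, 0 ≤ κ z y)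
    (hκc : Continuous fun p : X × X => κ p.1 p.2) (hl : 0 ≤ l) :
    Continuous (phi u κ l) := by
  rw [Metric.continuous_iff]
  intro b ε hε
  obtain ⟨η, hη, hmod⟩ := kappa_unif (κ := κ) hκc (ε / (2 * (l + 1)))
    (by positivity)
  refine ⟨η, hη, fun a ha => ?_⟩
  have h1 : phi u κ l a ≤ phi u κ l b + l * (ε / (2 * (l + 1))) :=
    phi_mod hM hκ0 hl (fun z => hmod a b z ha)
  have h2 : phi u κ l b ≤ phi u κ l a + l * (ε / (2 * (l + 1))) :=
    phi_mod hM hκ0 hl (fun z => hmod b a z (by rwa [dist_comm]))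
  rw [Real.dist_eq, abs_lt]
  have hkey : l * (ε / (2 * (l + 1))) < ε := by
    rw [div_eq_inv_mul]
    have h3 : l / (2 * (l + 1)) < 1 := by
      rw [div_lt_one (by positivity)]; nlinarith
    calc l * ((2 * (l + 1))⁻¹ * ε) = (l / (2 * (l + 1))) * ε := by ring
    _ < 1 * ε := by exact mul_lt_mul_of_pos_right h3 hε
    _ = ε := one_mul ε
  constructor <;> nlinarith

end Aux

section Aux2
variable {X : Type*} [MetricSpace X] [CompactSpace X] [Nonempty X]
  [MeasurableSpace X] [BorelSpace X]

/-- piecewise selector along a list of centers -/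
noncomputable def pwSel (η : ℝ) (zs : X → X) : List X → X → X
  | [], _ => Classical.arbitrary X
  | i :: rest, y => if dist y i < η then zs i else pwSel η zs rest y

lemma pwSel_measurable (η : ℝ) (zs : X → X) (L : List X) :
    Measurable (pwSel η zs L) := by
  induction L with
  | nil => exact measurable_const
  | cons i rest ih =>
    have hs : MeasurableSet {y : X | dist y i < η} := by
      have : {y : X | dist y i < η} = Metric.ball i η := by
        ext y; simp [Metric.mem_ball]
      rw [this]
      exact Metric.isOpen_ball.measurableSet
    exact Measurable.ite hs measurable_const ih

lemma pwSel_spec (η : ℝ) (zs : X → X) (L : List X) (y : X)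
    (h : ∃ i ∈ L, dist y i < η) :
    ∃ i ∈ L, dist y i < η ∧ pwSel η zs L y = zs i := by
  induction L with
  | nil => simp at h
  | cons j rest ih =>
    by_cases hj : dist y j < η
    · exact ⟨j, by simp, hj, by simp [pwSel, hj]⟩
    · obtain ⟨i, hi, hd⟩ := h
      rcases List.mem_cons.1 hi with rfl | hi'
      · exact absurd hd hj
      · obtain ⟨i, h1, h2, h3⟩ := ih ⟨i, hi', hd⟩
        exact ⟨i, List.mem_cons_of_mem _ h1, h2, by simp [pwSel, hj, h3]⟩

end Aux2

section Aux3
variable {X : Type*} [MetricSpace X] [CompactSpace X] [Nonempty X]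
  [MeasurableSpace X] [BorelSpace X]
variable {u : X → ℝ} {κ : X → X → ℝ} {M : ℝ}

/-- Key approximation: a measurable map `T` which is a uniform `ε`-argmax selection. -/
lemma exists_approx_argmax (hM : ∀ x, |u x| ≤ M) (hκ0 : ∀ z y, 0 ≤ κ z y)
    (hκc : Continuous fun p : X × X => κ p.1 p.2) {l : ℝ} (hl : 0 ≤ l)
    {ε : ℝ} (hε : 0 < ε) :
    ∃ T : X → X, Measurable T ∧
      ∀ y, phi u κ l y - ε ≤ u (T y) - l * κ (T y) y := by
  set ε₁ : ℝ := ε / (4 * (l + 1)) with hε₁def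
  have hε₁ : 0 < ε₁ := by positivity
  obtain ⟨η, hη, hmod⟩ := kappa_unif (κ := κ) hκc ε₁ hε₁
  -- finite subcover by balls of radius η
  obtain ⟨t, ht⟩ := isCompact_univ.elim_finite_subcover
    (fun i : X => Metric.ball i η) (fun i => Metric.isOpen_ball)
    (fun x _ => Set.mem_iUnion.2 ⟨x, Metric.mem_ball_self hη⟩)
  -- approximate maximizer at each center
  have hsel : ∀ i : X, ∃ z : X, phi u κ l i - ε / 2 < u z - l * κ z i := by
    intro i
    have : phi u κ l i - ε / 2 < phi u κ l i := by linarith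
    exact exists_lt_of_lt_ciSup this
  choose zs hzs using hsel
  refine ⟨pwSel η zs t.toList, pwSel_measurable η zs t.toList, fun y => ?_⟩
  have hcov : ∃ i ∈ t.toList, dist y i < η := by
    have := ht (Set.mem_univ y)
    simp only [Set.mem_iUnion, Metric.mem_ball] at this
    obtain ⟨i, hi, hd⟩ := this
    exact ⟨i, Finset.mem_toList.2 hi, hd⟩
  obtain ⟨i, _, hd, hTy⟩ := pwSel_spec η zs t.toList y hcov
  rw [hTy]
  -- chain of inequalities
  have h1 : phi u κ l y ≤ phi u κ l i + l * ε₁ :=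
    phi_mod hM hκ0 hl (fun z => hmod y i z hd)
  have h2 := hzs i
  have h3 : |κ (zs i) i - κ (zs i) y| ≤ ε₁ := hmod i y (zs i) (by rwa [dist_comm])
  have h4 := (abs_le.1 h3).1
  have h5 := mul_le_mul_of_nonneg_left h4 hl
  -- l * ε₁ ≤ ε / 4
  have h6 : l * ε₁ ≤ ε / 4 := by
    rw [hε₁def]
    rw [mul_div_assoc']
    rw [div_le_div_iff₀ (by positivity) (by norm_num)]
    nlinarith
  nlinarith

end Aux3

section Main
variable {X : Type*} [MetricSpace X] [CompactSpace X] [Nonempty X]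
  [MeasurableSpace X] [BorelSpace X]

lemma int_snd_eq {P : Measure X} {ξ : Measure (X × X)} (hs : ξ.map Prod.snd = P)
    {g : X → ℝ} (hg : Measurable g) : ∫ p, g p.2 ∂ξ = ∫ y, g y ∂P := by
  rw [← hs, integral_map measurable_snd.aemeasurable hg.aestronglyMeasurable]

lemma int_fst_eq {Q : Measure X} {ξ : Measure (X × X)} (hf : ξ.map Prod.fst = Q)
    {g : X → ℝ} (hg : Measurable g) : ∫ p, g p.1 ∂ξ = ∫ x, g x ∂Q := by
  rw [← hf, integral_map measurable_fst.aemeasurable hg.aestronglyMeasurable]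


end Main

/-- Strong duality:
`sup { ∫ u dQ : D_κ(Q,P) ≤ δ } = inf_{λ ≥ 0} [ λδ + ∫ sup_z (u(z) − λκ(z,y)) P(dy) ]`. -/
theorem strong_duality
    {X : Type*} [MetricSpace X] [CompactSpace X] [Nonempty X]
    [MeasurableSpace X] [BorelSpace X]
    (u : X → ℝ) (husc : UpperSemicontinuous u) (hub : ∃ M : ℝ, ∀ x, |u x| ≤ M)
    (P : Measure X) [IsProbabilityMeasure P]
    (κ : X → X → ℝ) (hκc : Continuous fun p : X × X => κ p.1 p.2)
    (hκ0 : ∀ z y, 0 ≤ κ z y) (hκeq : ∀ z y, κ z y = 0 ↔ z = y)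
    (δ : ℝ) (hδ : 0 < δ) :
    sSup { r : ℝ | ∃ Q : Measure X, IsProbabilityMeasure Q ∧
        transportCost κ Q P ≤ δ ∧ r = ∫ x, u x ∂Q } =
      ⨅ lam : {l : ℝ // 0 ≤ l},
        (lam.1 * δ + ∫ y, (⨆ z, (u z - lam.1 * κ z y)) ∂P) := by
  classical
  obtain ⟨M, hM⟩ := hub
  have hu_meas : Measurable u := husc.measurable
  have hκ_meas : Measurable fun p : X × X => κ p.1 p.2 := hκc.measurable
  -- bound for κ
  obtain ⟨K, hK⟩ : ∃ K : ℝ, ∀ p : X × X, κ p.1 p.2 ≤ K := by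
    obtain ⟨K, hK⟩ := (isCompact_range hκc).bddAbove
    exact ⟨K, fun p => hK ⟨p, rfl⟩⟩
  -- the dual objective
  set Φ : ℝ → ℝ := fun l => l * δ + ∫ y, phi u κ l y ∂P with hΦdef
  have hgoal_rhs : (⨅ lam : {l : ℝ // 0 ≤ l},
      (lam.1 * δ + ∫ y, (⨆ z, (u z - lam.1 * κ z y)) ∂P)) =
      ⨅ lam : {l : ℝ // 0 ≤ l}, Φ lam.1 := rfl
  rw [hgoal_rhs]
  set pr : Set ℝ := { r : ℝ | ∃ Q : Measure X, IsProbabilityMeasure Q ∧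
      transportCost κ Q P ≤ δ ∧ r = ∫ x, u x ∂Q } with hprdef
  -- integrability facts
  have hphi_cont : ∀ l : ℝ, 0 ≤ l → Continuous (phi u κ l) :=
    fun l hl => phi_continuous hM hκ0 hκc hl
  have hphi_int : ∀ l : ℝ, 0 ≤ l → Integrable (phi u κ l) P := fun l hl =>
    integrable_of_bdd ((hphi_cont l hl).measurable).aestronglyMeasurable
      (phi_abs_le hM hκ0 hκeq hl)
  have hu_int : ∀ (μ : Measure X) [IsProbabilityMeasure μ], Integrable u μ := by
    intro μ _; exact integrable_of_bdd hu_meas.aestronglyMeasurable hM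
  -- Φ is bounded below by ∫ u dP
  have hΦ_lb : ∀ l : ℝ, 0 ≤ l → (∫ x, u x ∂P) ≤ Φ l := by
    intro l hl
    have h1 : (∫ x, u x ∂P) ≤ ∫ y, phi u κ l y ∂P :=
      integral_mono (hu_int P) (hphi_int l hl) (u_le_phi hM hκ0 hκeq hl)
    have : 0 ≤ l * δ := mul_nonneg hl hδ.le
    simp only [hΦdef]; linarith
  have hbdd_rng : BddBelow (Set.range fun lam : {l : ℝ // 0 ≤ l} => Φ lam.1) := by
    refine ⟨∫ x, u x ∂P, ?_⟩
    rintro r ⟨lam, rfl⟩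
    exact hΦ_lb lam.1 lam.2
  -- couplings of arbitrary first marginal with P
  set Xi : Set (Measure (X × X)) :=
    {ξ | IsProbabilityMeasure ξ ∧ ξ.map Prod.snd = P} with hXidef
  -- integrability over couplings
  have hint_u : ∀ ξ ∈ Xi, Integrable (fun p : X × X => u p.1) ξ := by
    rintro ξ ⟨hξp, -⟩
    exact integrable_of_bdd (hu_meas.comp measurable_fst).aestronglyMeasurable
      (fun p => hM p.1)
  have hint_κ : ∀ ξ ∈ Xi, Integrable (fun p : X × X => κ p.1 p.2) ξ := by
    rintro ξ ⟨hξp, -⟩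
    exact integrable_of_bdd hκ_meas.aestronglyMeasurable
      (fun p => abs_le.2 ⟨by have h1 := hκ0 p.1 p.2; have h2 := hK p; linarith, hK p⟩)
  -- membership in the primal set
  have hmem_pr : ∀ ξ ∈ Xi, (∫ p, κ p.1 p.2 ∂ξ) ≤ δ → (∫ p, u p.1 ∂ξ) ∈ pr := by
    rintro ξ ⟨hξp, hξs⟩ hcost
    refine ⟨ξ.map Prod.fst, Measure.isProbabilityMeasure_map measurable_fst.aemeasurable, ?_, ?_⟩
    · refine le_trans (csInf_le ?_ ⟨ξ, hξp, rfl, hξs, rfl⟩) hcost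
      refine ⟨0, ?_⟩
      rintro r ⟨ξ', hξ'p, -, -, rfl⟩
      exact integral_nonneg fun p => hκ0 p.1 p.2
    · exact int_fst_eq rfl hu_meas
  -- the diagonal coupling
  have hdiag_meas : Measurable fun y : X => (y, y) := measurable_id.prodMk measurable_id
  have hdiag : (P.map fun y => (y, y)) ∈ Xi ∧
      (∫ p, κ p.1 p.2 ∂(P.map fun y => (y, y))) = 0 := by
    refine ⟨⟨Measure.isProbabilityMeasure_map hdiag_meas.aemeasurable, ?_⟩, ?_⟩
    · rw [Measure.map_map measurable_snd hdiag_meas]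
      have : (Prod.snd ∘ fun y : X => (y, y)) = id := rfl
      rw [this, Measure.map_id]
    · rw [integral_map hdiag_meas.aemeasurable hκ_meas.aestronglyMeasurable]
      have : ∀ y : X, κ ((fun y : X => (y, y)) y).1 ((fun y : X => (y, y)) y).2 = 0 :=
        fun y => (hκeq y y).2 rfl
      simp only [this, integral_zero]
  -- primal set nonempty and bounded above
  have hpr_ne : pr.Nonempty := by
    refine ⟨∫ p, u p.1 ∂(P.map fun y => (y, y)), hmem_pr _ hdiag.1 ?_⟩
    rw [hdiag.2]; exact hδ.le
  have hpr_bdd : BddAbove pr := by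
    refine ⟨M, ?_⟩
    rintro r ⟨Q, hQ, -, rfl⟩
    have h := integral_mono (μ := Q) (hu_int Q) (integrable_const M)
      (fun x => (abs_le.1 (hM x)).2)
    simpa using h
  -- weak duality
  have hweak : ∀ r ∈ pr, ∀ l : ℝ, 0 ≤ l → r ≤ Φ l := by
    rintro r ⟨Q, hQ, hc, rfl⟩ l hl
    have key : ∀ ε : ℝ, 0 < ε → (∫ x, u x ∂Q) ≤ Φ l + l * ε := by
      intro ε hε
      -- the cost set for Q is nonempty (product coupling)
      have hprodf : (Q.prod P).map Prod.fst = Q := by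
        rw [Measure.map_fst_prod]; simp
      have hprods : (Q.prod P).map Prod.snd = P := by
        rw [Measure.map_snd_prod]; simp
      have hne : { r : ℝ | ∃ ξ : Measure (X × X), IsProbabilityMeasure ξ ∧
          ξ.map Prod.fst = Q ∧ ξ.map Prod.snd = P ∧ r = ∫ p, κ p.1 p.2 ∂ξ }.Nonempty :=
        ⟨∫ p, κ p.1 p.2 ∂(Q.prod P), Q.prod P, inferInstance, hprodf, hprods, rfl⟩
      have hlt2 : transportCost κ Q P < δ + ε := lt_of_le_of_lt hc (by linarith)
      obtain ⟨r', ⟨ξ, hξp, hξf, hξs, rfl⟩, hr'⟩ := exists_lt_of_csInf_lt hne hlt2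
      have hXiξ : ξ ∈ Xi := ⟨hξp, hξs⟩
      have hphil_meas : Measurable (phi u κ l) := (hphi_cont l hl).measurable
      have hint_phi : Integrable (fun p : X × X => phi u κ l p.2) ξ :=
        integrable_of_bdd (hphil_meas.comp measurable_snd).aestronglyMeasurable
          (fun p => phi_abs_le hM hκ0 hκeq hl p.2)
      have hint_lκ : Integrable (fun p : X × X => l * κ p.1 p.2) ξ :=
        (hint_κ ξ hXiξ).const_mul l
      have e1 : (∫ p, u p.1 ∂ξ) ≤ ∫ p, (phi u κ l p.2 + l * κ p.1 p.2) ∂ξ := by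
        refine integral_mono (hint_u ξ hXiξ) (hint_phi.add hint_lκ) fun p => ?_
        have := le_phi hM hκ0 hl p.1 p.2 (u := u)
        linarith
      rw [integral_add hint_phi hint_lκ, integral_const_mul] at e1
      rw [int_snd_eq hξs hphil_meas] at e1
      have e2 : l * (∫ p, κ p.1 p.2 ∂ξ) ≤ l * (δ + ε) :=
        mul_le_mul_of_nonneg_left hr'.le hl
      rw [← int_fst_eq hξf hu_meas]
      simp only [hΦdef]
      linarith
    by_contra hcon
    push_neg at hcon
    have hε : 0 < ((∫ x, u x ∂Q) - Φ l) / (l + 1) := div_pos (by linarith) (by linarith)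
    have := key _ hε
    have hll : l / (l + 1) < 1 := by
      rw [div_lt_one (by linarith)]; linarith
    have h2 : l * (((∫ x, u x ∂Q) - Φ l) / (l + 1)) < (∫ x, u x ∂Q) - Φ l := by
      rw [mul_div_assoc']
      rw [div_lt_iff₀ (by linarith)]
      nlinarith
    linarith
  -- key approximation: near-optimal couplings for the inner problem
  have happrox : ∀ l : ℝ, 0 ≤ l → ∀ ε : ℝ, 0 < ε → ∃ ξ ∈ Xi,
      (∫ y, phi u κ l y ∂P) - ε ≤ (∫ p, u p.1 ∂ξ) - l * (∫ p, κ p.1 p.2 ∂ξ) := by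
    intro l hl ε hε
    obtain ⟨T, hT, hTgood⟩ := exists_approx_argmax hM hκ0 hκc hl hε
    have hg : Measurable fun y : X => (T y, y) := hT.prodMk measurable_id
    refine ⟨P.map fun y => (T y, y), ⟨Measure.isProbabilityMeasure_map hg.aemeasurable, ?_⟩, ?_⟩
    · rw [Measure.map_map measurable_snd hg]
      have : (Prod.snd ∘ fun y : X => (T y, y)) = id := rfl
      rw [this, Measure.map_id]
    · have e_u : (∫ p, u p.1 ∂(P.map fun y => (T y, y))) = ∫ y, u (T y) ∂P :=
        integral_map hg.aemeasurable (hu_meas.comp measurable_fst).aestronglyMeasurable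
      have e_κ : (∫ p, κ p.1 p.2 ∂(P.map fun y => (T y, y))) = ∫ y, κ (T y) y ∂P :=
        integral_map hg.aemeasurable hκ_meas.aestronglyMeasurable
      rw [e_u, e_κ]
      have hint1 : Integrable (fun y => u (T y)) P :=
        integrable_of_bdd (hu_meas.comp hT).aestronglyMeasurable (fun y => hM (T y))
      have hint2 : Integrable (fun y => κ (T y) y) P := by
        refine integrable_of_bdd (C := K) (hκ_meas.comp hg).aestronglyMeasurable fun y => ?_
        exact abs_le.2 ⟨by have h1 := hκ0 (T y) y; have h2 := hK (T y, y); linarith,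
          hK (T y, y)⟩
      show (∫ y, phi u κ l y ∂P) - ε ≤ (∫ y, u (T y) ∂P) - l * ∫ y, κ (T y) y ∂P
      rw [← integral_const_mul, ← integral_sub hint1 (hint2.const_mul l)]
      have : (∫ y, phi u κ l y ∂P) - ε = ∫ y, (phi u κ l y - ε) ∂P := by
        rw [integral_sub (hphi_int l hl) (integrable_const ε)]
        simp
      rw [this]
      exact integral_mono ((hphi_int l hl).sub (integrable_const ε))
        (hint1.sub (hint2.const_mul l)) fun y => hTgood y
  -- the feasible-pairs set is convex
  set S : Set (ℝ × ℝ) :=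
    {q | ∃ ξ ∈ Xi, q = (∫ p, κ p.1 p.2 ∂ξ, ∫ p, u p.1 ∂ξ)} with hSdef
  have hS_conv : Convex ℝ S := by
    rintro q1 ⟨ξ1, hξ1, rfl⟩ q2 ⟨ξ2, hξ2, rfl⟩ a b ha hb hab
    set ξ : Measure (X × X) := (ENNReal.ofReal a) • ξ1 + (ENNReal.ofReal b) • ξ2 with hξdef
    have hne_top : ENNReal.ofReal a ≠ ⊤ := ENNReal.ofReal_ne_top
    have hne_top' : ENNReal.ofReal b ≠ ⊤ := ENNReal.ofReal_ne_top
    have hone : ENNReal.ofReal a + ENNReal.ofReal b = 1 := by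
      rw [← ENNReal.ofReal_add ha hb, hab, ENNReal.ofReal_one]
    have hXiξ : ξ ∈ Xi := by
      have h1 := hξ1.1
      have h2 := hξ2.1
      constructor
      · constructor
        rw [hξdef, Measure.add_apply, Measure.smul_apply, Measure.smul_apply,
          measure_univ, measure_univ, smul_eq_mul, smul_eq_mul, mul_one, mul_one, hone]
      · rw [hξdef, Measure.map_add _ _ measurable_snd, Measure.map_smul, Measure.map_smul,
          hξ1.2, hξ2.2, ← add_smul, hone, one_smul]
    have hint : ∀ g : (X × X) → ℝ, Integrable g ξ1 → Integrable g ξ2 →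
        (∫ p, g p ∂ξ) = a * (∫ p, g p ∂ξ1) + b * (∫ p, g p ∂ξ2) := by
      intro g hg1 hg2
      rw [hξdef, integral_add_measure (hg1.smul_measure hne_top) (hg2.smul_measure hne_top'),
        integral_smul_measure, integral_smul_measure,
        ENNReal.toReal_ofReal ha, ENNReal.toReal_ofReal hb, smul_eq_mul, smul_eq_mul]
    refine ⟨ξ, hXiξ, ?_⟩
    have e1 := hint _ (hint_κ ξ1 hξ1) (hint_κ ξ2 hξ2)
    have e2 := hint _ (hint_u ξ1 hξ1) (hint_u ξ2 hξ2)
    have : a • ((∫ p, κ p.1 p.2 ∂ξ1 : ℝ), (∫ p, u p.1 ∂ξ1 : ℝ)) +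
        b • ((∫ p, κ p.1 p.2 ∂ξ2 : ℝ), (∫ p, u p.1 ∂ξ2 : ℝ)) =
        (a * (∫ p, κ p.1 p.2 ∂ξ1) + b * (∫ p, κ p.1 p.2 ∂ξ2),
         a * (∫ p, u p.1 ∂ξ1) + b * (∫ p, u p.1 ∂ξ2)) := by
      simp [Prod.ext_iff, smul_eq_mul]
    rw [this, e1, e2]
  -- conclusion
  apply le_antisymm
  · exact csSup_le hpr_ne fun r hr => le_ciInf fun lam => hweak r hr lam.1 lam.2
  · by_contra hlt
    push_neg at hlt
    set s := sSup pr with hsdef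
    set m := ⨅ lam : {l : ℝ // 0 ≤ l}, Φ lam.1 with hmdef
    set m' := (s + m) / 2 with hm'def
    have hsm' : s < m' := by simp only [hm'def]; linarith
    have hm'm : m' < m := by simp only [hm'def]; linarith
    -- separation
    have hT'S : Disjoint (Set.Iio δ ×ˢ Set.Ioi m') S := by
      rw [Set.disjoint_left]
      rintro ⟨c, r⟩ ⟨hc, hr⟩ ⟨ξ, hξ, heq⟩
      have h1 : (∫ p, u p.1 ∂ξ) ∈ pr := by
        apply hmem_pr ξ hξ
        have : c = ∫ p, κ p.1 p.2 ∂ξ := congrArg Prod.fst heq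
        rw [← this]; exact (le_of_lt hc)
      have h2 : r = ∫ p, u p.1 ∂ξ := congrArg Prod.snd heq
      have h3 : r ≤ s := h2 ▸ le_csSup hpr_bdd h1
      exact absurd hr (by simp; linarith)
    obtain ⟨f, c, hfT', hfS⟩ := geometric_hahn_banach_open
      ((convex_Iio δ).prod (convex_Ioi m')) (isOpen_Iio.prod isOpen_Ioi)
      hS_conv hT'S
    set α := f (1, 0) with hαdef
    set β := f (0, 1) with hβdef
    have hf_eq : ∀ p : ℝ × ℝ, f p = α * p.1 + β * p.2 := by
      intro p
      have hp : p = p.1 • ((1:ℝ), (0:ℝ)) + p.2 • ((0:ℝ), (1:ℝ)) := by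
        simp [Prod.ext_iff]
      conv_lhs => rw [hp]
      rw [map_add, f.map_smul, f.map_smul, smul_eq_mul, smul_eq_mul]
      show p.1 * α + p.2 * β = _
      ring
    have hmemT' : ∀ c' r' : ℝ, c' < δ → m' < r' → α * c' + β * r' < c := by
      intro c' r' h1 h2
      have := hfT' (c', r') ⟨h1, h2⟩
      rwa [hf_eq] at this
    have hα : 0 ≤ α := by
      by_contra hneg
      push_neg at hneg
      set x := min (δ - 1) ((c - β * (m' + 1)) / α) with hxdef
      have h1 := hmemT' x (m' + 1) (lt_of_le_of_lt (min_le_left _ _) (by linarith))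
        (by linarith)
      have h2 : x ≤ (c - β * (m' + 1)) / α := min_le_right _ _
      have h3 : α * ((c - β * (m' + 1)) / α) ≤ α * x := mul_le_mul_of_nonpos_left h2 hneg.le
      have h4 : α * ((c - β * (m' + 1)) / α) = c - β * (m' + 1) := by
        rw [mul_comm, div_mul_cancel₀ _ (ne_of_lt hneg)]
      linarith
    have hβ : β ≤ 0 := by
      by_contra hneg
      push_neg at hneg
      set y := max (m' + 1) ((c - α * (δ - 1)) / β) with hydef
      have h1 := hmemT' (δ - 1) y (by linarith)
        (lt_of_lt_of_le (by linarith) (le_max_left _ _))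
      have h2 : (c - α * (δ - 1)) / β ≤ y := le_max_right _ _
      have h3 : β * ((c - α * (δ - 1)) / β) ≤ β * y := mul_le_mul_of_nonneg_left h2 hneg.le
      have h4 : β * ((c - α * (δ - 1)) / β) = c - α * (δ - 1) := by
        rw [mul_comm, div_mul_cancel₀ _ (ne_of_gt hneg)]
      linarith
    have hbound : α * δ + β * m' ≤ c := by
      by_contra hcon
      push_neg at hcon
      set D := α * δ + β * m' - c with hDdef
      have hD : 0 < D := by simp only [hDdef]; linarith
      have hαβ : 0 ≤ α - β := by linarith
      set t := min (1/2 : ℝ) (D / (2 * (α - β) + 1)) with htdef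
      have ht0 : 0 < t := lt_min (by norm_num) (by positivity)
      have h1 := hmemT' (δ - t) (m' + t) (by linarith) (by linarith)
      have ht2 : t * (2 * (α - β) + 1) ≤ D := by
        have := min_le_right (1/2 : ℝ) (D / (2 * (α - β) + 1))
        rw [← htdef] at this
        calc t * (2 * (α - β) + 1) ≤ (D / (2 * (α - β) + 1)) * (2 * (α - β) + 1) :=
          mul_le_mul_of_nonneg_right this (by linarith)
        _ = D := by field_simp
      nlinarith [mul_nonneg ht0.le hαβ]
    rcases lt_or_eq_of_le hβ with hβneg | hβ0
    · -- β < 0 case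
      set l0 := α / (-β) with hl0def
      have hβ' : (0:ℝ) < -β := by linarith
      have hl0 : 0 ≤ l0 := div_nonneg hα hβ'.le
      obtain ⟨ξ, hξXi, hξgood⟩ := happrox l0 hl0 ((m - m') / 2) (by linarith)
      obtain ⟨CC, hCC⟩ : ∃ CC : ℝ, CC = ∫ p, κ p.1 p.2 ∂ξ := ⟨_, rfl⟩
      obtain ⟨UU, hUU⟩ : ∃ UU : ℝ, UU = ∫ p, u p.1 ∂ξ := ⟨_, rfl⟩
      obtain ⟨II, hII⟩ : ∃ II : ℝ, II = ∫ y, phi u κ l0 y ∂P := ⟨_, rfl⟩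
      rw [← hCC, ← hUU, ← hII] at hξgood
      have hSmem : ((∫ p, κ p.1 p.2 ∂ξ : ℝ), (∫ p, u p.1 ∂ξ : ℝ)) ∈ S := ⟨ξ, hξXi, rfl⟩
      have h2 := hfS _ hSmem
      rw [hf_eq, ← hCC, ← hUU] at h2
      have h3 : l0 * (-β) = α := div_mul_cancel₀ α (ne_of_gt hβ')
      have h4 : α * δ + β * m' ≤ α * CC + β * UU := le_trans hbound h2
      rw [← h3] at h4
      have key : UU - l0 * CC ≤ m' - l0 * δ := by nlinarith [h4, hβ']
      -- contradiction with m being the infimum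
      have h6 : Φ l0 ≤ m' + (m - m') / 2 := by
        have h8 : Φ l0 = l0 * δ + II := by rw [hII]
        rw [h8]
        linarith [hξgood, key]
      have h7 : m ≤ Φ l0 := ciInf_le hbdd_rng ⟨l0, hl0⟩
      have hfin1 : m ≤ m' + (m - m') / 2 := le_trans h7 h6
      have hfin2 : m ≤ m' := by linarith [hfin1]
      exact absurd hfin2 (not_le.2 hm'm)
    · -- β = 0 case
      have hc0 : c ≤ 0 := by
        have hmem : ((0:ℝ), (∫ p, u p.1 ∂(P.map fun y => (y, y)) : ℝ)) ∈ S := by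
          refine ⟨P.map fun y => (y, y), hdiag.1, ?_⟩
          rw [hdiag.2]
        have := hfS _ hmem
        rw [hf_eq] at this
        rw [hβ0] at this
        simpa using this
      have hα0 : α = 0 := by
        rw [hβ0] at hbound
        by_contra h
        have hpos : 0 < α * δ := mul_pos (lt_of_le_of_ne hα (Ne.symm h)) hδ
        linarith
      have hfin := hmemT' (δ - 1) (m' + 1) (by linarith) (by linarith)
      rw [hα0, hβ0] at hfin
      simp at hfin
      linarith
end

section
/- Let S be a nonempty set and let B(S) be the bounded functions S → ℝ with the supremum norm. Suppose T₁, T₂ : B(S) → B(S) are both γ-contractions for some γ ∈ (0,1) with fixed points u₁* and u₂* respectively, T₂ is monotone (u ≤ v pointwise implies T₂u ≤ T₂v pointwise), and T₁ u ≤ T₂ u pointwise for every u ∈ B(S). Then u₁* ≤ u₂* pointwise. -/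
/-- A real-valued function on `S` is bounded. -/
def IsBoundedFun {S : Type*} (u : S → ℝ) : Prop := ∃ M : ℝ, ∀ s, |u s| ≤ M

/-- Abstract comparison lemma: if `T₁, T₂` are `γ`-contractions on the bounded functions
with fixed points `u₁*, u₂*`, `T₂` is monotone, and `T₁ u ≤ T₂ u` pointwise for every
bounded `u`, then `u₁* ≤ u₂*` pointwise. -/
theorem fixed_point_comparison
    {S : Type*} [Nonempty S] (γ : ℝ) (hγ0 : 0 < γ) (hγ1 : γ < 1)
    (T₁ T₂ : (S → ℝ) → (S → ℝ))
    (hT₁b : ∀ u, IsBoundedFun u → IsBoundedFun (T₁ u))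
    (hT₂b : ∀ u, IsBoundedFun u → IsBoundedFun (T₂ u))
    (hT₁c : ∀ u v : S → ℝ, IsBoundedFun u → IsBoundedFun v →
      (⨆ s, |T₁ u s - T₁ v s|) ≤ γ * ⨆ s, |u s - v s|)
    (hT₂c : ∀ u v : S → ℝ, IsBoundedFun u → IsBoundedFun v →
      (⨆ s, |T₂ u s - T₂ v s|) ≤ γ * ⨆ s, |u s - v s|)
    (hmono : ∀ u v : S → ℝ, IsBoundedFun u → IsBoundedFun v →
      (∀ s, u s ≤ v s) → ∀ s, T₂ u s ≤ T₂ v s)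
    (hle : ∀ u : S → ℝ, IsBoundedFun u → ∀ s, T₁ u s ≤ T₂ u s)
    (u₁ u₂ : S → ℝ) (hu₁ : IsBoundedFun u₁) (hu₂ : IsBoundedFun u₂)
    (hfix₁ : T₁ u₁ = u₁) (hfix₂ : T₂ u₂ = u₂) :
    ∀ s, u₁ s ≤ u₂ s := by
  obtain ⟨M₁, hM₁⟩ := id hu₁
  obtain ⟨M₂, hM₂⟩ := id hu₂
  set f : S → ℝ := fun s => max (u₁ s - u₂ s) 0 with hf
  have hbddf : BddAbove (Set.range f) := by
    refine ⟨M₁ + M₂, ?_⟩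
    rintro x ⟨s, rfl⟩
    have h1 := abs_le.mp (hM₁ s)
    have h2 := abs_le.mp (hM₂ s)
    have hM10 : (0:ℝ) ≤ M₁ := le_trans (abs_nonneg _) (hM₁ (Classical.arbitrary S))
    have hM20 : (0:ℝ) ≤ M₂ := le_trans (abs_nonneg _) (hM₂ (Classical.arbitrary S))
    simp only [f, max_le_iff]
    constructor <;> linarith [h1.1, h1.2, h2.1, h2.2]
  set D : ℝ := ⨆ s, f s with hD
  have hfD : ∀ s, f s ≤ D := fun s => le_ciSup hbddf s
  have hD0 : 0 ≤ D := le_trans (le_max_right _ _) (hfD (Classical.arbitrary S))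
  set w : S → ℝ := fun s => u₂ s + D with hw
  have hwb : IsBoundedFun w := ⟨M₂ + D, fun s => by
    have := abs_le.mp (hM₂ s)
    rw [abs_le]; constructor <;> simp only [w] <;> linarith⟩
  have hcontr := hT₂c w u₂ hwb hu₂
  have hsup : (⨆ s : S, |w s - u₂ s|) = D := by
    have : ∀ s : S, |w s - u₂ s| = D := fun s => by
      simp [w, abs_of_nonneg hD0]
    simp only [this, ciSup_const]
  rw [hsup] at hcontr
  -- pointwise bound from the sup
  obtain ⟨A, hA⟩ := hT₂b w hwb
  obtain ⟨B, hB⟩ := hT₂b u₂ hu₂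
  have hbdd2 : BddAbove (Set.range fun s => |T₂ w s - T₂ u₂ s|) := by
    refine ⟨A + B, ?_⟩
    rintro x ⟨s, rfl⟩
    calc |T₂ w s - T₂ u₂ s| ≤ |T₂ w s| + |T₂ u₂ s| := abs_sub _ _
      _ ≤ A + B := add_le_add (hA s) (hB s)
  have key : ∀ s, u₁ s ≤ u₂ s + γ * D := by
    intro s
    have h1 : u₁ s ≤ T₂ u₁ s := by
      conv_lhs => rw [← hfix₁]
      exact hle u₁ hu₁ s
    have h2 : T₂ u₁ s ≤ T₂ w s :=
      hmono u₁ w hu₁ hwb (fun t => by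
        have := hfD t
        simp only [f, max_le_iff] at this
        simp only [w]; linarith [this.1]) s
    have h3 : T₂ w s - T₂ u₂ s ≤ γ * D :=
      le_trans (le_trans (le_abs_self _) (le_ciSup hbdd2 s)) hcontr
    have h4 : T₂ u₂ s = u₂ s := by rw [hfix₂]
    linarith
  have hDle : D ≤ γ * D := by
    refine ciSup_le fun s => ?_
    have := key s
    have hγD : 0 ≤ γ * D := mul_nonneg hγ0.le hD0
    simp only [f, max_le_iff]
    constructor <;> linarith
  have hDneg : D ≤ 0 := by nlinarith
  intro s
  have := key s
  nlinarith
end
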